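/- Suppose max_{j∈{1,…,m}} ( ν_j + Σ_{i≠j} ζ_i ) < 1. Then the Gram matrix K_S^H K_S of the union S = S_1 ∪ … ∪ S_m is invertible and for every index j ∉ S, ‖(K_S^H K_S)^{-1} K_S^H k_j‖₁ ≤ (Σ_{j=1}^m ζ_j) / (1 − max_{j} ( ν_j + Σ_{i≠j} ζ_i )). -/

import Mathlib

open Matrix Finset

noncomputable section

/-- The Hermitian inner product `⟨u,v⟩ = ∑ l, conj (u l) * v l` on `ℂ^L`. -/
def ipC {L : ℕ} (u v : Fin L → ℂ) : ℂ := ∑ l, star (u l) * v l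

/-- The `j`-th column `k_j` of the dictionary `K`. -/
def col {L N : ℕ} (K : Matrix (Fin L) (Fin N) ℂ) (j : Fin N) : Fin L → ℂ := fun l => K l j

/-- The submatrix `K_S` of the columns of `K` indexed by `S`. -/
def subMat {L N : ℕ} (K : Matrix (Fin L) (Fin N) ℂ) (S : Finset (Fin N)) :
    Matrix (Fin L) {j : Fin N // j ∈ S} ℂ := Matrix.of fun l j => K l j.1

/-- The Gram matrix `K_Sᴴ K_S`. -/
def gram {L N : ℕ} (K : Matrix (Fin L) (Fin N) ℂ) (S : Finset (Fin N)) :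
    Matrix {j : Fin N // j ∈ S} {j : Fin N // j ∈ S} ℂ := (subMat K S)ᴴ * subMat K S

/-- The vector `(K_Sᴴ K_S)⁻¹ K_Sᴴ k_j`. -/
def ercVec {L N : ℕ} (K : Matrix (Fin L) (Fin N) ℂ) (S : Finset (Fin N)) (j : Fin N) :
    {i : Fin N // i ∈ S} → ℂ := ((gram K S)⁻¹ * (subMat K S)ᴴ) *ᵥ _root_.col K j

/-- The ℓ1 norm of a complex vector, as a real number. -/
def l1 {ι : Type} [Fintype ι] (v : ι → ℂ) : ℝ := ∑ i, ‖v i‖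

/-- The ℓ1 norm of a complex vector, as a nonnegative real number. -/
def l1n {ι : Type} [Fintype ι] (v : ι → ℂ) : NNReal := ∑ i, ‖v i‖₊

/-!
Write `G` for a matrix with unit diagonal, cover its index set by groups `A j`, and let `ζ j`,
`ν j` bound the column sums of `|G|` over `A j` off `A j` and inside `A j` (diagonal excluded).
If `G x = b`, then `x_i = b_i - ∑_{l ≠ i} G_il x_l`; summing over `A j` and writing `t_j` for the
`ℓ¹` mass of `x` on `A j` and `T` for the total mass gives
`t_j ≤ ‖b‖_{A j} + ν_j t_j + ζ_j (T - t_j)`. When `‖b‖_{A j} ≤ c ζ_j`, this rearranges to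
`t_j (1 - B + ∑ ζ) ≤ ζ_j (c + T)`, and summing over the cover yields `T (1 - B) ≤ c ∑ ζ`.
With `b = 0` this forces `x = 0`, so `G` is invertible; for the Gram matrix of unit-norm atoms and
`b = K_Sᴴ k_a` with `a ∉ S`, the hypothesis on `b` holds with `c = 1`.
-/

lemma Finset.subtype_erase {α : Type*} [DecidableEq α] (p : α → Prop) [DecidablePred p]
    (s : Finset α) (a : Subtype p) : (s.subtype p).erase a = (s.erase a).subtype p := by
  ext x
  simp [Subtype.ext_iff]

lemma Finset.sum_le_sum_sum_of_forall_exists_mem {ι κ : Type*} [Fintype ι] [Fintype κ]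
    {f : ι → ℝ} (hf : ∀ i, 0 ≤ f i) (A : κ → Finset ι) (hA : ∀ i, ∃ j, i ∈ A j) :
    ∑ i, f i ≤ ∑ j, ∑ i ∈ A j, f i := by
  classical
  rw [Finset.sum_comm' (t' := univ) (s' := fun i => {j | i ∈ A j}) (by simp)]
  refine sum_le_sum fun i _ => ?_
  obtain ⟨j, hj⟩ := hA i
  exact single_le_sum (f := fun _ => f i) (fun _ _ => hf i) (by simpa using hj)

lemma mul_one_sub_le_of_forall_le_add {κ : Type*} [Fintype κ] [DecidableEq κ] {T c B : ℝ}
    {t ζ ν : κ → ℝ}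
    (ht : ∀ j, 0 ≤ t j) (hζ : ∀ j, 0 ≤ ζ j) (hT : T ≤ ∑ j, t j)
    (hgroup : ∀ j, t j ≤ c * ζ j + (ν j * t j + ζ j * (T - t j)))
    (hB : ∀ j, ν j + ∑ i ∈ univ.erase j, ζ i ≤ B) (hB1 : B < 1) :
    T * (1 - B) ≤ c * ∑ j, ζ j := by
  set Z := ∑ j, ζ j
  have hZ : 0 ≤ Z := sum_nonneg fun j _ => hζ j
  have hj : ∀ j, t j * (1 - B + Z) ≤ ζ j * (c + T) := by
    intro j
    have hνj : ν j + (Z - ζ j) ≤ B := by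
      simpa only [sum_erase_eq_sub (mem_univ j)] using hB j
    nlinarith [hgroup j, ht j]
  have hsum : T * (1 - B + Z) ≤ Z * (c + T) :=
    calc T * (1 - B + Z) ≤ (∑ j, t j) * (1 - B + Z) :=
          mul_le_mul_of_nonneg_right hT (by linarith)
      _ = ∑ j, t j * (1 - B + Z) := sum_mul _ _ _
      _ ≤ ∑ j, ζ j * (c + T) := sum_le_sum fun j _ => hj j
      _ = Z * (c + T) := (sum_mul _ _ _).symm
  linarith

section UnitDiagonal

variable {ι κ 𝕜 : Type*} [Fintype ι] [DecidableEq ι] [Fintype κ] [DecidableEq κ] [NormedField 𝕜]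
  {G : Matrix ι ι 𝕜}

lemma Matrix.norm_le_norm_mulVec_add_of_diag_eq_one (hG : ∀ i, G i i = 1) (x : ι → 𝕜) (i : ι) :
    ‖x i‖ ≤ ‖(G *ᵥ x) i‖ + ∑ l ∈ univ.erase i, ‖G i l‖ * ‖x l‖ := by
  have hsplit : (G *ᵥ x) i = x i + ∑ l ∈ univ.erase i, G i l * x l := by
    rw [mulVec, dotProduct, ← add_sum_erase _ _ (mem_univ i), hG, one_mul]
  calc ‖x i‖ = ‖(G *ᵥ x) i - ∑ l ∈ univ.erase i, G i l * x l‖ := by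
        rw [hsplit, add_sub_cancel_right]
    _ ≤ ‖(G *ᵥ x) i‖ + ∑ l ∈ univ.erase i, ‖G i l * x l‖ :=
        (norm_sub_le _ _).trans (add_le_add_right (norm_sum_le _ _) _)
    _ = ‖(G *ᵥ x) i‖ + ∑ l ∈ univ.erase i, ‖G i l‖ * ‖x l‖ := by simp_rw [norm_mul]

lemma Matrix.sum_norm_le_sum_norm_mulVec_add_of_diag_eq_one (hG : ∀ i, G i i = 1)
    (s : Finset ι) {ζ ν : ℝ}
    (hν : ∀ l ∈ s, ∑ i ∈ s.erase l, ‖G i l‖ ≤ ν) (hζ : ∀ l ∉ s, ∑ i ∈ s, ‖G i l‖ ≤ ζ)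
    (x : ι → 𝕜) :
    ∑ i ∈ s, ‖x i‖ ≤ ∑ i ∈ s, ‖(G *ᵥ x) i‖ + (ν * ∑ i ∈ s, ‖x i‖ + ζ * ∑ i ∈ sᶜ, ‖x i‖) := by
  have hswap : ∑ i ∈ s, ∑ l ∈ univ.erase i, ‖G i l‖ * ‖x l‖ =
      ∑ l, (∑ i ∈ s.erase l, ‖G i l‖) * ‖x l‖ := by
    simp_rw [sum_mul]
    exact sum_comm' fun i l => by simp only [mem_erase, mem_univ, and_true]; tauto
  have hoff : ∑ l, (∑ i ∈ s.erase l, ‖G i l‖) * ‖x l‖ ≤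
      ν * ∑ i ∈ s, ‖x i‖ + ζ * ∑ i ∈ sᶜ, ‖x i‖ := by
    rw [← sum_add_sum_compl s, mul_sum, mul_sum]
    gcongr with l hl l hl
    · exact hν l hl
    · rw [erase_eq_of_notMem (mem_compl.mp hl)]
      exact hζ l (mem_compl.mp hl)
  calc ∑ i ∈ s, ‖x i‖ ≤ ∑ i ∈ s, (‖(G *ᵥ x) i‖ + ∑ l ∈ univ.erase i, ‖G i l‖ * ‖x l‖) :=
        sum_le_sum fun i _ => norm_le_norm_mulVec_add_of_diag_eq_one hG x i
    _ ≤ _ := by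
        rw [sum_add_distrib, hswap]
        gcongr

theorem Matrix.sum_norm_mul_one_sub_le_of_blockCoherence (hG : ∀ i, G i i = 1)
    (A : κ → Finset ι)
    (hA : ∀ i, ∃ j, i ∈ A j) {ζ ν : κ → ℝ} (hζ0 : ∀ j, 0 ≤ ζ j)
    (hν : ∀ j, ∀ l ∈ A j, ∑ i ∈ (A j).erase l, ‖G i l‖ ≤ ν j)
    (hζ : ∀ j, ∀ l ∉ A j, ∑ i ∈ A j, ‖G i l‖ ≤ ζ j)
    {B : ℝ} (hB : ∀ j, ν j + ∑ i ∈ univ.erase j, ζ i ≤ B) (hB1 : B < 1)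
    (x : ι → 𝕜) {c : ℝ} (hx : ∀ j, ∑ i ∈ A j, ‖(G *ᵥ x) i‖ ≤ c * ζ j) :
    (∑ i, ‖x i‖) * (1 - B) ≤ c * ∑ j, ζ j := by
  refine mul_one_sub_le_of_forall_le_add (fun j => sum_nonneg fun i _ => norm_nonneg (x i)) hζ0
    (sum_le_sum_sum_of_forall_exists_mem (fun i => norm_nonneg (x i)) A hA) (fun j => ?_) hB hB1
  have hcompl := sum_add_sum_compl (A j) fun i => ‖x i‖
  have hgroup := sum_norm_le_sum_norm_mulVec_add_of_diag_eq_one hG (A j) (hν j) (hζ j) x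
  have hxj := hx j
  rw [← hcompl, add_sub_cancel_left]
  linarith

theorem Matrix.isUnit_of_blockCoherence (hG : ∀ i, G i i = 1) (A : κ → Finset ι)
    (hA : ∀ i, ∃ j, i ∈ A j) {ζ ν : κ → ℝ} (hζ0 : ∀ j, 0 ≤ ζ j)
    (hν : ∀ j, ∀ l ∈ A j, ∑ i ∈ (A j).erase l, ‖G i l‖ ≤ ν j)
    (hζ : ∀ j, ∀ l ∉ A j, ∑ i ∈ A j, ‖G i l‖ ≤ ζ j)
    {B : ℝ} (hB : ∀ j, ν j + ∑ i ∈ univ.erase j, ζ i ≤ B) (hB1 : B < 1) :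
    IsUnit G := by
  rw [isUnit_iff_isUnit_det, isUnit_iff_ne_zero, Ne, ← exists_mulVec_eq_zero_iff]
  rintro ⟨x, hx0, hx⟩
  have hmass : (∑ i, ‖x i‖) * (1 - B) ≤ 0 := by
    simpa using sum_norm_mul_one_sub_le_of_blockCoherence hG A hA hζ0 hν hζ hB hB1 x (c := 0)
      (by simp [hx])
  have hzero : ∑ i, ‖x i‖ = 0 :=
    le_antisymm (nonpos_of_mul_nonpos_left hmass (sub_pos.mpr hB1))
      (sum_nonneg fun i _ => norm_nonneg _)
  exact hx0 (funext fun i => norm_eq_zero.mp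
    ((sum_eq_zero_iff_of_nonneg fun i _ => norm_nonneg _).mp hzero i (mem_univ i)))

end UnitDiagonal

section Gram

variable {L N : ℕ} (K : Matrix (Fin L) (Fin N) ℂ)

def interCoherence (s : Finset (Fin N)) : NNReal :=
  sᶜ.sup fun i => ∑ l ∈ s, ‖ipC (_root_.col K i) (_root_.col K l)‖₊

def intraCoherence (s : Finset (Fin N)) : NNReal :=
  s.sup fun i => ∑ l ∈ s.erase i, ‖ipC (_root_.col K i) (_root_.col K l)‖₊

lemma sum_norm_ipC_le_interCoherence {s : Finset (Fin N)} {a : Fin N} (ha : a ∉ s) :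
    ∑ l ∈ s, ‖ipC (_root_.col K a) (_root_.col K l)‖ ≤ interCoherence K s :=
  (NNReal.coe_sum _ _).symm.trans_le <| NNReal.coe_le_coe.mpr <|
    le_sup (f := fun i => ∑ l ∈ s, ‖ipC (_root_.col K i) (_root_.col K l)‖₊) (mem_compl.mpr ha)

lemma sum_norm_ipC_le_intraCoherence {s : Finset (Fin N)} {a : Fin N} (ha : a ∈ s) :
    ∑ l ∈ s.erase a, ‖ipC (_root_.col K a) (_root_.col K l)‖ ≤ intraCoherence K s :=
  (NNReal.coe_sum _ _).symm.trans_le <| NNReal.coe_le_coe.mpr <|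
    le_sup (f := fun i => ∑ l ∈ s.erase i, ‖ipC (_root_.col K i) (_root_.col K l)‖₊) ha

lemma norm_ipC_comm (u v : Fin L → ℂ) : ‖ipC u v‖ = ‖ipC v u‖ := by
  have : ipC v u = star (ipC u v) := by simp [ipC, star_sum, mul_comm]
  rw [this, norm_star]

variable (S : Finset (Fin N))

lemma conjTranspose_subMat_mulVec_apply (v : Fin L → ℂ) (i : {j // j ∈ S}) :
    ((subMat K S)ᴴ *ᵥ v) i = ipC (_root_.col K i) v := by
  simp [mulVec, dotProduct, subMat, conjTranspose_apply, ipC, _root_.col]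

lemma gram_apply (i l : {j // j ∈ S}) :
    gram K S i l = ipC (_root_.col K i) (_root_.col K l) := by
  simp [_root_.gram, ipC, _root_.col, subMat, mul_apply, conjTranspose_apply]

lemma gram_apply_self (hK : ∀ j, ∑ l, ‖K l j‖ ^ 2 = 1) (i : {j // j ∈ S}) : gram K S i i = 1 := by
  have : ipC (_root_.col K i) (_root_.col K i) = ((∑ l, ‖K l i‖ ^ 2 : ℝ) : ℂ) := by
    push_cast
    simp [ipC, _root_.col, Complex.conj_mul']
  rw [gram_apply, this, hK, Complex.ofReal_one]

lemma norm_gram_apply (i l : {j // j ∈ S}) :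
    ‖gram K S i l‖ = ‖ipC (_root_.col K l) (_root_.col K i)‖ := by
  rw [gram_apply, norm_ipC_comm]

lemma norm_conjTranspose_subMat_mulVec_col_apply (a : Fin N) (i : {j // j ∈ S}) :
    ‖((subMat K S)ᴴ *ᵥ _root_.col K a) i‖ = ‖ipC (_root_.col K a) (_root_.col K i)‖ := by
  rw [conjTranspose_subMat_mulVec_apply, norm_ipC_comm]

lemma gram_mulVec_ercVec (hG : IsUnit (gram K S)) (a : Fin N) :
    gram K S *ᵥ ercVec K S a = (subMat K S)ᴴ *ᵥ _root_.col K a := by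
  rw [ercVec, mulVec_mulVec, ← Matrix.mul_assoc,
    mul_nonsing_inv _ ((isUnit_iff_isUnit_det _).mp hG), Matrix.one_mul]

variable {K S} {s : Finset (Fin N)}

lemma sum_norm_gram_erase_le_intraCoherence (hs : s ⊆ S) {l : {j // j ∈ S}} (hl : l.1 ∈ s) :
    ∑ i ∈ (s.subtype (· ∈ S)).erase l, ‖gram K S i l‖ ≤ intraCoherence K s := by
  simp_rw [subtype_erase, norm_gram_apply]
  rw [sum_subtype_of_mem (fun i => ‖ipC (_root_.col K l) (_root_.col K i)‖)
    fun i hi => hs (mem_of_mem_erase hi)]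
  exact sum_norm_ipC_le_intraCoherence K hl

lemma sum_norm_gram_le_interCoherence (hs : s ⊆ S) {l : {j // j ∈ S}} (hl : l.1 ∉ s) :
    ∑ i ∈ s.subtype (· ∈ S), ‖gram K S i l‖ ≤ interCoherence K s := by
  simp_rw [norm_gram_apply]
  rw [sum_subtype_of_mem (fun i => ‖ipC (_root_.col K l) (_root_.col K i)‖) fun i hi => hs hi]
  exact sum_norm_ipC_le_interCoherence K hl

lemma sum_norm_conjTranspose_subMat_mulVec_le_interCoherence (hs : s ⊆ S) {a : Fin N}
    (ha : a ∉ s) :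
    ∑ i ∈ s.subtype (· ∈ S), ‖((subMat K S)ᴴ *ᵥ _root_.col K a) i‖ ≤ interCoherence K s := by
  simp_rw [norm_conjTranspose_subMat_mulVec_col_apply]
  rw [sum_subtype_of_mem (fun i => ‖ipC (_root_.col K a) (_root_.col K i)‖) fun i hi => hs hi]
  exact sum_norm_ipC_le_interCoherence K ha

end Gram

theorem stmt6_general (L N m : ℕ) (hm : 1 ≤ m)
    (K : Matrix (Fin L) (Fin N) ℂ)
    (hunit : ∀ j : Fin N, ∑ l, ‖K l j‖ ^ 2 = 1)
    (Ssets : Fin m → Finset (Fin N))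
    (S : Finset (Fin N)) (hS : S = Finset.univ.biUnion Ssets)
    (ζ ν : Fin m → ℝ)
    (hζ : ∀ j, ζ j =
      (((Ssets j)ᶜ.sup fun i => ∑ l ∈ Ssets j, ‖ipC (_root_.col K i) (_root_.col K l)‖₊ : NNReal) : ℝ))
    (hν : ∀ j, ν j =
      (((Ssets j).sup fun i => ∑ l ∈ (Ssets j).erase i, ‖ipC (_root_.col K i) (_root_.col K l)‖₊ : NNReal) : ℝ))
    (B : ℝ)
    (hB : B = Finset.univ.sup' (Finset.univ_nonempty_iff.mpr ⟨⟨0, hm⟩⟩)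
      (fun j => ν j + ∑ i ∈ Finset.univ.erase j, ζ i))
    (hB1 : B < 1) :
    IsUnit (gram K S) ∧
    ∀ j ∉ S, l1 (ercVec K S j) ≤ (∑ j, ζ j) / (1 - B) := by
  have hsub (j : Fin m) : Ssets j ⊆ S := hS ▸ subset_biUnion_of_mem Ssets (mem_univ j)
  have hcover (i : {i // i ∈ S}) : ∃ j, i ∈ (Ssets j).subtype (· ∈ S) := by
    simpa [hS] using i.2
  have hζ0 (j : Fin m) : 0 ≤ ζ j := hζ j ▸ NNReal.coe_nonneg _
  have hνG (j : Fin m) (l) (hl : l ∈ (Ssets j).subtype (· ∈ S)) :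
      ∑ i ∈ ((Ssets j).subtype (· ∈ S)).erase l, ‖gram K S i l‖ ≤ ν j :=
    hν j ▸ sum_norm_gram_erase_le_intraCoherence (hsub j) (mem_subtype.mp hl)
  have hζG (j : Fin m) (l) (hl : l ∉ (Ssets j).subtype (· ∈ S)) :
      ∑ i ∈ (Ssets j).subtype (· ∈ S), ‖gram K S i l‖ ≤ ζ j :=
    hζ j ▸ sum_norm_gram_le_interCoherence (hsub j) (mt mem_subtype.mpr hl)
  have hBj (j : Fin m) : ν j + ∑ i ∈ univ.erase j, ζ i ≤ B :=
    hB ▸ le_sup' (fun j => ν j + ∑ i ∈ univ.erase j, ζ i) (mem_univ j)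
  have hdiag := gram_apply_self K S hunit
  have hunitG := isUnit_of_blockCoherence hdiag _ hcover hζ0 hνG hζG hBj hB1
  refine ⟨hunitG, fun a ha => ?_⟩
  rw [le_div_iff₀ (sub_pos.mpr hB1), ← one_mul (∑ j, ζ j)]
  refine sum_norm_mul_one_sub_le_of_blockCoherence hdiag _ hcover hζ0 hνG hζG hBj hB1 _
    fun j => ?_
  rw [gram_mulVec_ercVec K S hunitG, one_mul, hζ j]
  exact sum_norm_conjTranspose_subMat_mulVec_le_interCoherence (hsub j) fun h => ha (hsub j h)

/-- equation (42), the intermediate bound of Theorem 2: for index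
sets `S_1, …, S_m` with union `S`, restricted inter-coherences `ζ_j` and restricted
intra-coherences `ν_j`, if `max_j (ν_j + ∑_{i ≠ j} ζ_i) < 1` then `K_Sᴴ K_S` is
invertible and for every `j ∉ S`,
`‖(K_Sᴴ K_S)⁻¹ K_Sᴴ k_j‖₁ ≤ (∑_j ζ_j) / (1 - max_j (ν_j + ∑_{i ≠ j} ζ_i))`. -/
theorem stmt6 (L N m : ℕ) (hL : 1 ≤ L) (hN : 1 ≤ N) (hm : 1 ≤ m)
    (K : Matrix (Fin L) (Fin N) ℂ)
    (hunit : ∀ j : Fin N, ∑ l, ‖K l j‖ ^ 2 = 1)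
    (Ssets : Fin m → Finset (Fin N))
    (S : Finset (Fin N)) (hS : S = Finset.univ.biUnion Ssets)
    (ζ ν : Fin m → ℝ)
    (hζ : ∀ j, ζ j =
      (((Ssets j)ᶜ.sup fun i => ∑ l ∈ Ssets j, ‖ipC (_root_.col K i) (_root_.col K l)‖₊ : NNReal) : ℝ))
    (hν : ∀ j, ν j =
      (((Ssets j).sup fun i => ∑ l ∈ (Ssets j).erase i, ‖ipC (_root_.col K i) (_root_.col K l)‖₊ : NNReal) : ℝ))
    (B : ℝ)
    (hB : B = Finset.univ.sup' (Finset.univ_nonempty_iff.mpr ⟨⟨0, hm⟩⟩)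
      (fun j => ν j + ∑ i ∈ Finset.univ.erase j, ζ i))
    (hB1 : B < 1) :
    IsUnit (gram K S) ∧
    ∀ j ∉ S, l1 (ercVec K S j) ≤ (∑ j, ζ j) / (1 - B) :=
  stmt6_general L N m hm K hunit Ssets S hS ζ ν hζ hν B hB hB1
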